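/- Suppose X is invertible. Let λ ∈ ℂ be an eigenvalue of the complex matrix W = X⁻¹Y, and assume n_j − λ r_j ≠ 0 for all j = 1,…,N−1. Then D¹_N(λ) = 0. -/

import Mathlib

/-- Labels `a`, `b`, `c` for the sequences in the collection `𝒜_N`. -/
inductive Label where
  | a : Label
  | b : Label
  | c : Label
deriving DecidableEq

instance : Fintype Label :=
  ⟨{Label.a, Label.b, Label.c}, fun x => by cases x <;> simp⟩

/-- Admissibility of a label sequence (with `n = N - 1` labels, index `i` standing
for `j = i + 1`): the last label is not `a` and, for `2 ≤ j ≤ N-1`, `t_j = c` implies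
`t_{j-1} = a` while `t_j ∈ {a,b}` implies `t_{j-1} ∈ {b,c}`. -/
def Admissible {n : ℕ} (t : Fin n → Label) : Prop :=
  (∀ h : 0 < n, t ⟨n - 1, by omega⟩ ≠ Label.a) ∧
  ∀ j : ℕ, ∀ h : j + 1 < n,
    (t ⟨j + 1, h⟩ = Label.c → t ⟨j, by omega⟩ = Label.a) ∧
    (t ⟨j + 1, h⟩ ≠ Label.c → t ⟨j, by omega⟩ ≠ Label.a)

/-- The collection `𝒜_N` (with `n = N - 1` labels per sequence). -/
noncomputable def AdmSet (n : ℕ) : Finset (Fin n → Label) :=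
  haveI := Classical.decPred (Admissible (n := n))
  Finset.univ.filter Admissible

/-- The value `v_j(t)`: `A_j` if `t_j = a`, `-B_j` if `t_j = b`, `-C_j` if `t_j = c`. -/
def labelVal {n : ℕ} (A B C : ℕ → ℂ) (t : Fin n → Label) (j : Fin n) : ℂ :=
  match t j with
  | Label.a => A (j.val + 1)
  | Label.b => -B (j.val + 1)
  | Label.c => -C (j.val + 1)

/-- `D¹_N = Σ_{t ∈ 𝒜_N, t_1 ≠ c} ∏_{j=1}^{N-1} v_j(t)`, with `n = N - 1`. -/
noncomputable def D1 (n : ℕ) (A B C : ℕ → ℂ) : ℂ :=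
  haveI : DecidablePred fun t : Fin n → Label => ∀ h : 0 < n, t ⟨0, h⟩ ≠ Label.c :=
    Classical.decPred _
  ∑ t ∈ (AdmSet n).filter (fun t => ∀ h : 0 < n, t ⟨0, h⟩ ≠ Label.c),
    ∏ j, labelVal A B C t j

/-- The `(N-1)×(N-1)` tridiagonal complex matrix with 1-indexed subdiagonal entries
`sub_{i+1}` (at position `(i+1, i)`), diagonal entries `dia_i` and superdiagonal
entries `sup_i` (at position `(i, i+1)`), built from real data. -/
def triMatC (n : ℕ) (sub dia sup : ℕ → ℝ) : Matrix (Fin n) (Fin n) ℂ :=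
  Matrix.of fun i j =>
    if i.val = j.val then (dia (i.val + 1) : ℂ)
    else if i.val + 1 = j.val then (sup (i.val + 1) : ℂ)
    else if j.val + 1 = i.val then (sub (i.val + 1) : ℂ)
    else 0

/-- `μ` is an eigenvalue of the square complex matrix `M` if `M v = μ v` for some
nonzero vector `v`. -/
def IsEig {n : ℕ} (M : Matrix (Fin n) (Fin n) ℂ) (μ : ℂ) : Prop :=
  ∃ v : Fin n → ℂ, v ≠ 0 ∧ M.mulVec v = μ • v

/-!
Admissible label sequences are the tilings of `1, …, N-1` by monomers `b` and dimers `ac`, except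
that a sequence may open with a lone `c`. Peeling off the first label therefore gives the continuant
recurrence `D¹_{k+2} = -B₁ D¹_{k+1} - A₁ C₂ D¹_k` (for the shifted data), which up to the sign
`(-1)^k` is the cofactor recurrence of the determinant of the tridiagonal matrix with diagonal `B`,
superdiagonal `A` and subdiagonal `C`. For `A = n - λr`, `B = m - λq`, `C = l - λp` that matrix is
`Y - λX`, which kills every eigenvector of `X⁻¹Y`; so its determinant, and with it `D¹_N(λ)`,
vanishes.
-/

lemma Label.sum_univ {M : Type*} [AddCommMonoid M] (g : Label → M) :
    ∑ x, g x = g .a + g .b + g .c := by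
  rw [show (Finset.univ : Finset Label) = {.a, .b, .c} from rfl,
    Finset.sum_insert (by decide), Finset.sum_insert (by decide), Finset.sum_singleton, add_assoc]

lemma Fin.sum_fin_succ_pi {α M : Type*} [Fintype α] [AddCommMonoid M] {n : ℕ}
    (F : (Fin (n + 1) → α) → M) :
    ∑ t, F t = ∑ x, ∑ s : Fin n → α, F (Fin.cons x s) :=
  (Fintype.sum_equiv (Fin.consEquiv fun _ => α) _ _ fun _ => rfl).symm.trans
    (Fintype.sum_prod_type _)

@[simp]
lemma Fin.cons_mk_succ {α : Type*} {n : ℕ} (x : α) (s : Fin n → α) (j : ℕ) (h : j + 1 < n + 1) :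
    (Fin.cons x s : Fin (n + 1) → α) ⟨j + 1, h⟩ = s ⟨j, by omega⟩ :=
  rfl

lemma admissible_iff {n : ℕ} (t : Fin n → Label) :
    Admissible t ↔ (∀ h : 0 < n, t ⟨n - 1, by omega⟩ ≠ .a) ∧
      ∀ j (h : j + 1 < n), (t ⟨j, by omega⟩ = .a ↔ t ⟨j + 1, h⟩ = .c) := by
  refine and_congr_right' (forall₂_congr fun j h => ?_)
  constructor
  · exact fun ⟨h1, h2⟩ => ⟨fun ha => not_not.1 (mt h2 (not_not.2 ha)), h1⟩
  · exact fun h' => ⟨h'.2, mt h'.1⟩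

def StartsWithC {n : ℕ} (t : Fin n → Label) : Prop :=
  ∃ h : 0 < n, t ⟨0, h⟩ = .c

@[simp]
lemma startsWithC_cons {n : ℕ} (x : Label) (s : Fin n → Label) :
    StartsWithC (Fin.cons x s : Fin (n + 1) → Label) ↔ x = .c := by
  simp [StartsWithC]

lemma admissible_cons_iff {n : ℕ} (x : Label) (s : Fin n → Label) :
    Admissible (Fin.cons x s : Fin (n + 1) → Label) ↔ Admissible s ∧ (x = .a ↔ StartsWithC s) := by
  rw [admissible_iff, admissible_iff]
  cases n with
  | zero => simp [StartsWithC]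
  | succ k =>
    simp only [StartsWithC, Fin.cons_mk_succ, add_tsub_cancel_right, Nat.lt_add_one_iff]
    constructor
    · rintro ⟨hlast, hpair⟩
      exact ⟨⟨fun _ => hlast (by omega), fun j _ => hpair (j + 1) (by omega)⟩,
        by simpa using hpair 0 (by omega)⟩
    · rintro ⟨⟨hlast, hpair⟩, hx⟩
      refine ⟨fun _ => hlast (by omega), fun j hj => ?_⟩
      cases j with
      | zero => simpa using hx
      | succ j => exact hpair j (by omega)

def Label.weight (A B C : ℂ) : Label → ℂ
  | .a => A
  | .b => -B
  | .c => -C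

lemma prod_labelVal_cons {n : ℕ} (A B C : ℕ → ℂ) (x : Label) (s : Fin n → Label) :
    ∏ j, labelVal A B C (Fin.cons x s) j
      = x.weight (A 1) (B 1) (C 1) *
          ∏ j, labelVal (A ∘ Nat.succ) (B ∘ Nat.succ) (C ∘ Nat.succ) s j := by
  rw [Fin.prod_univ_succ]
  cases x <;> rfl

open Classical in
noncomputable def admSum (n : ℕ) (A B C : ℕ → ℂ) (P : (Fin n → Label) → Prop) : ℂ :=
  ∑ t, if Admissible t ∧ P t then ∏ j, labelVal A B C t j else 0

@[simp]
lemma admSum_false (n : ℕ) (A B C : ℕ → ℂ) : admSum n A B C (fun _ => False) = 0 := by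
  simp [admSum]

lemma admSum_succ (n : ℕ) (A B C : ℕ → ℂ) (P : (Fin (n + 1) → Label) → Prop) :
    admSum (n + 1) A B C P = ∑ x, x.weight (A 1) (B 1) (C 1) *
      admSum n (A ∘ Nat.succ) (B ∘ Nat.succ) (C ∘ Nat.succ)
        (fun s => (x = .a ↔ StartsWithC s) ∧ P (Fin.cons x s)) := by
  classical
  simp only [admSum, Fin.sum_fin_succ_pi, prod_labelVal_cons, Finset.mul_sum,
    mul_ite, mul_zero]
  refine Finset.sum_congr rfl fun x _ => Finset.sum_congr rfl fun s _ => if_congr ?_ rfl rfl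
  rw [admissible_cons_iff, and_assoc]

lemma D1_eq_admSum (n : ℕ) (A B C : ℕ → ℂ) :
    D1 n A B C = admSum n A B C fun t => ¬StartsWithC t := by
  classical
  rw [D1, AdmSet, Finset.filter_filter, Finset.sum_filter, admSum]
  simp only [StartsWithC, not_exists]

lemma D1_zero (A B C : ℕ → ℂ) : D1 0 A B C = 1 := by
  simp [D1_eq_admSum, admSum, admissible_iff, StartsWithC]

lemma admSum_startsWithC_zero (A B C : ℕ → ℂ) : admSum 0 A B C StartsWithC = 0 := by
  simp [admSum, StartsWithC]

lemma D1_succ (n : ℕ) (A B C : ℕ → ℂ) :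
    D1 (n + 1) A B C = -B 1 * D1 n (A ∘ Nat.succ) (B ∘ Nat.succ) (C ∘ Nat.succ)
      + A 1 * admSum n (A ∘ Nat.succ) (B ∘ Nat.succ) (C ∘ Nat.succ) StartsWithC := by
  rw [D1_eq_admSum, admSum_succ, Label.sum_univ]
  simp [Label.weight, D1_eq_admSum, add_comm]

lemma admSum_startsWithC_succ (n : ℕ) (A B C : ℕ → ℂ) :
    admSum (n + 1) A B C StartsWithC
      = -C 1 * D1 n (A ∘ Nat.succ) (B ∘ Nat.succ) (C ∘ Nat.succ) := by
  simp [D1_eq_admSum, admSum_succ, Label.sum_univ, Label.weight]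

lemma D1_add_two (n : ℕ) (A B C : ℕ → ℂ) :
    D1 (n + 2) A B C = -B 1 * D1 (n + 1) (A ∘ Nat.succ) (B ∘ Nat.succ) (C ∘ Nat.succ)
      - A 1 * C 2 * D1 n ((A ∘ Nat.succ) ∘ Nat.succ) ((B ∘ Nat.succ) ∘ Nat.succ)
          ((C ∘ Nat.succ) ∘ Nat.succ) := by
  rw [D1_succ, admSum_startsWithC_succ]
  simp only [Function.comp_apply]
  ring

def tridiag {R : Type*} [Zero R] (n : ℕ) (sub dia sup : ℕ → R) : Matrix (Fin n) (Fin n) R :=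
  Matrix.of fun i j =>
    if i.val = j.val then dia (i.val + 1)
    else if i.val + 1 = j.val then sup (i.val + 1)
    else if j.val + 1 = i.val then sub (i.val + 1)
    else 0

lemma tridiag_apply_eq_zero {R : Type*} [Zero R] {n : ℕ} (sub dia sup : ℕ → R) {i j : Fin n}
    (h : i.val + 1 < j.val ∨ j.val + 1 < i.val) : tridiag n sub dia sup i j = 0 := by
  simp only [tridiag, Matrix.of_apply]
  split_ifs <;> first | rfl | omega

lemma tridiag_submatrix_succ {R : Type*} [Zero R] (n : ℕ) (sub dia sup : ℕ → R) :
    (tridiag (n + 1) sub dia sup).submatrix Fin.succ Fin.succ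
      = tridiag n (sub ∘ Nat.succ) (dia ∘ Nat.succ) (sup ∘ Nat.succ) := by
  ext i j
  simp [tridiag]

lemma det_tridiag_add_two {R : Type*} [CommRing R] (n : ℕ) (sub dia sup : ℕ → R) :
    (tridiag (n + 2) sub dia sup).det
      = dia 1 * (tridiag (n + 1) (sub ∘ Nat.succ) (dia ∘ Nat.succ) (sup ∘ Nat.succ)).det
        - sup 1 * sub 2 * (tridiag n ((sub ∘ Nat.succ) ∘ Nat.succ) ((dia ∘ Nat.succ) ∘ Nat.succ)
            ((sup ∘ Nat.succ) ∘ Nat.succ)).det := by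
  set M := tridiag (n + 2) sub dia sup
  have hM₀₀ : M 0 0 = dia 1 := by simp [M, tridiag]
  have hM₀₁ : M 0 1 = sup 1 := by simp [M, tridiag]
  have hM₁₀ : M 1 0 = sub 2 := by simp [M, tridiag]
  have hM : ∀ i j : Fin (n + 2), i.val + 1 < j.val ∨ j.val + 1 < i.val → M i j = 0 :=
    fun _ _ => tridiag_apply_eq_zero sub dia sup
  -- expand the minor of the entry `(0, 1)` along its first column, where only `M 1 0` survives
  have hminor : (M.submatrix Fin.succ (Fin.succAbove 1)).det
      = sub 2 * (tridiag n ((sub ∘ Nat.succ) ∘ Nat.succ) ((dia ∘ Nat.succ) ∘ Nat.succ)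
            ((sup ∘ Nat.succ) ∘ Nat.succ)).det := by
    have hsub : (M.submatrix Fin.succ (Fin.succAbove 1)).submatrix (Fin.succAbove 0) Fin.succ
        = (M.submatrix Fin.succ Fin.succ).submatrix Fin.succ Fin.succ := by
      ext i j
      simp
    rw [Matrix.det_succ_column_zero, Fintype.sum_eq_single 0, hsub, tridiag_submatrix_succ,
      tridiag_submatrix_succ]
    · simp [hM₁₀]
    · intro i hi
      rw [Matrix.submatrix_apply, Fin.one_succAbove_zero, hM, mul_zero, zero_mul]
      have hi' : i.val ≠ 0 := Fin.val_ne_of_ne hi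
      exact Or.inr (by simp only [Fin.val_zero, Fin.val_succ]; omega)
  rw [Matrix.det_succ_row_zero, Fintype.sum_eq_add 0 1 (by simp), Fin.succAbove_zero,
    tridiag_submatrix_succ, hminor, hM₀₀, hM₀₁]
  · simp only [Fin.val_zero, Fin.val_one, pow_zero, pow_one]
    ring
  · rintro j ⟨hj₀, hj₁⟩
    rw [hM, mul_zero, zero_mul]
    have h₀ : j.val ≠ 0 := Fin.val_ne_of_ne hj₀
    have h₁ : j.val ≠ 1 := Fin.val_ne_of_ne hj₁
    exact Or.inl (by simp only [Fin.val_zero]; omega)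

theorem D1_eq_neg_one_pow_mul_det_tridiag (n : ℕ) (A B C : ℕ → ℂ) :
    D1 n A B C = (-1) ^ n * (tridiag n C B A).det := by
  induction n using Nat.twoStepInduction generalizing A B C with
  | zero => simp [D1_zero]
  | one =>
    rw [D1_succ, D1_zero, admSum_startsWithC_zero]
    simp [Matrix.det_unique, tridiag]
  | more n ih₀ ih₁ =>
    rw [D1_add_two, ih₀, ih₁, det_tridiag_add_two]
    ring

lemma tridiag_sub_smul {R : Type*} [Ring R] (n : ℕ) (sub dia sup sub' dia' sup' : ℕ → R) (c : R) :
    tridiag n sub dia sup - c • tridiag n sub' dia' sup'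
      = tridiag n (fun k => sub k - c * sub' k) (fun k => dia k - c * dia' k)
          (fun k => sup k - c * sup' k) := by
  ext i j
  simp only [tridiag, Matrix.sub_apply, Matrix.smul_apply, Matrix.of_apply, smul_eq_mul]
  split_ifs <;> simp

lemma triMatC_eq_tridiag (n : ℕ) (sub dia sup : ℕ → ℝ) :
    triMatC n sub dia sup
      = tridiag n (fun k => (sub k : ℂ)) (fun k => (dia k : ℂ)) fun k => (sup k : ℂ) :=
  rfl

open Matrix in
lemma IsEig.det_sub_smul_eq_zero {n : ℕ} {X Y : Matrix (Fin n) (Fin n) ℂ} {μ : ℂ}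
    (hX : IsUnit X.det) (h : IsEig (X⁻¹ * Y) μ) : (Y - μ • X).det = 0 := by
  obtain ⟨v, hv, hvμ⟩ := h
  have hY : Y *ᵥ v = μ • X *ᵥ v := calc
    Y *ᵥ v = X *ᵥ ((X⁻¹ * Y) *ᵥ v) := by
      rw [mulVec_mulVec, ← Matrix.mul_assoc, mul_nonsing_inv X hX, Matrix.one_mul]
    _ = μ • X *ᵥ v := by rw [hvμ, mulVec_smul]
  refine exists_mulVec_eq_zero_iff.mp ⟨v, hv, ?_⟩
  rw [sub_mulVec, smul_mulVec, hY, sub_self]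

theorem stmt2_general (N : ℕ) (p q r l m n : ℕ → ℝ)
    (hX : IsUnit (triMatC (N - 1) p q r).det)
    (lam : ℂ)
    (hlam : IsEig ((triMatC (N - 1) p q r)⁻¹ * triMatC (N - 1) l m n) lam) :
    D1 (N - 1) (fun j => (n j : ℂ) - lam * (r j : ℂ))
      (fun j => (m j : ℂ) - lam * (q j : ℂ))
      (fun j => (l j : ℂ) - lam * (p j : ℂ)) = 0 := by
  have hdet := hlam.det_sub_smul_eq_zero hX
  rw [triMatC_eq_tridiag, triMatC_eq_tridiag, tridiag_sub_smul] at hdet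
  rw [D1_eq_neg_one_pow_mul_det_tridiag, hdet, mul_zero]

/-- If `X` is invertible, `λ` is an eigenvalue of `W = X⁻¹ Y` and `n_j - λ r_j ≠ 0`
for all `j = 1, …, N-1`, then `λ` is a root of `D¹_N`. -/
theorem stmt2 (N : ℕ) (hN : 2 ≤ N) (p q r l m n : ℕ → ℝ)
    (hX : IsUnit (triMatC (N - 1) p q r).det)
    (lam : ℂ)
    (hlam : IsEig ((triMatC (N - 1) p q r)⁻¹ * triMatC (N - 1) l m n) lam)
    (hA : ∀ j, 1 ≤ j → j ≤ N - 1 → (n j : ℂ) - lam * (r j : ℂ) ≠ 0) :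
    D1 (N - 1) (fun j => (n j : ℂ) - lam * (r j : ℂ))
      (fun j => (m j : ℂ) - lam * (q j : ℂ))
      (fun j => (l j : ℂ) - lam * (p j : ℂ)) = 0 :=
  stmt2_general N p q r l m n hX lam hlam
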